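/- Suppose the dataset contains two entries with s_1 = s_2 but y_1 ≠ y_2, the loss ℓ is the squared Euclidean error, the model class {f_θ} contains all constant functions on the relevant input, and there exist permutations π'_1 ∈ G_1, π'_2 ∈ G_2 with π'_1(y_1) = π'_2(y_2). If the dataset consists only of these two entries, then inf_{θ,π} r_s = 0 < inf_θ r. -/

import Mathlib

/-- A permutation acting on a vector in `ℝ^n` by permuting coordinates. -/
def permVec {n : ℕ} (π : Equiv.Perm (Fin n)) (y : EuclideanSpace ℝ (Fin n)) :
    EuclideanSpace ℝ (Fin n) :=
  WithLp.toLp 2 (fun j => y (π j))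

/-!
A single prediction `x` for one input carrying two different labels `a ≠ b` pays at least
`‖a - b‖² / 4` in squared error, since `‖a - b‖ ≤ ‖x - a‖ + ‖x - b‖`; so the classic risk is
bounded away from `0`. The symmetry-aware risk may relabel both entries to the common vector
`π'₁ y₁ = π'₂ y₂`, which a constant model predicts exactly.
-/

lemma norm_sub_sq_le_two_mul_add_sq {E : Type*} [SeminormedAddCommGroup E] (x a b : E) :
    ‖a - b‖ ^ 2 ≤ 2 * (‖x - a‖ ^ 2 + ‖x - b‖ ^ 2) :=
  calc ‖a - b‖ ^ 2 ≤ (‖x - a‖ + ‖x - b‖) ^ 2 := by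
        gcongr
        rw [norm_sub_rev x a]
        exact norm_sub_le_norm_sub_add_norm_sub a x b
    _ ≤ 2 * (‖x - a‖ ^ 2 + ‖x - b‖ ^ 2) := add_sq_le

lemma zero_lt_iInf_half_add_sq_norm_sub {ι E : Type*} [Nonempty ι] [NormedAddCommGroup E]
    (g : ι → E) {a b : E} (hab : a ≠ b) :
    0 < ⨅ i, (1 / 2 : ℝ) * (‖g i - a‖ ^ 2 + ‖g i - b‖ ^ 2) :=
  calc 0 < ‖a - b‖ ^ 2 / 4 := by have := norm_pos_iff.2 (sub_ne_zero.2 hab); positivity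
    _ ≤ _ := le_ciInf fun i => by linarith [norm_sub_sq_le_two_mul_add_sq (g i) a b]

lemma ciInf_eq_zero_of_nonneg {ι : Type*} {g : ι → ℝ} (hg : ∀ i, 0 ≤ g i) {i : ι}
    (hi : g i = 0) : ⨅ i, g i = 0 :=
  le_antisymm (ciInf_le_of_le ⟨0, Set.forall_mem_range.2 hg⟩ i hi.le) (Real.iInf_nonneg hg)

theorem stmt2_general (Θ S : Type*) (n : ℕ)
    (f : Θ → S → EuclideanSpace ℝ (Fin n))
    (s1 s2 : S) (y1 y2 : EuclideanSpace ℝ (Fin n))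
    (hs : s1 = s2) (hy : y1 ≠ y2)
    (G1 G2 : Subgroup (Equiv.Perm (Fin n)))
    (hconst : ∀ v : EuclideanSpace ℝ (Fin n), ∃ θ : Θ, f θ s1 = v ∧ f θ s2 = v)
    (π1 : G1) (π2 : G2)
    (hπ : permVec (π1 : Equiv.Perm (Fin n)) y1 = permVec (π2 : Equiv.Perm (Fin n)) y2) :
    (⨅ p : Θ × G1 × G2,
        (1 / 2 : ℝ) * (‖f p.1 s1 - permVec (p.2.1 : Equiv.Perm (Fin n)) y1‖ ^ 2
          + ‖f p.1 s2 - permVec (p.2.2 : Equiv.Perm (Fin n)) y2‖ ^ 2)) = 0 ∧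
    0 < ⨅ θ : Θ, (1 / 2 : ℝ) * (‖f θ s1 - y1‖ ^ 2 + ‖f θ s2 - y2‖ ^ 2) := by
  subst hs
  obtain ⟨θ, hθ, -⟩ := hconst (permVec (π1 : Equiv.Perm (Fin n)) y1)
  have : Nonempty Θ := ⟨θ⟩
  refine ⟨ciInf_eq_zero_of_nonneg (fun _ => by positivity) (i := (θ, π1, π2)) ?_,
    zero_lt_iInf_half_add_sq_norm_sub (fun θ => f θ s1) hy⟩
  simp [hθ, hπ]

/-- If the dataset consists of two entries with `s1 = s2` but `y1 ≠ y2`, the loss is the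
squared Euclidean error, the model class contains all constant functions on the relevant
input, and some `π'_1 ∈ G1`, `π'_2 ∈ G2` satisfy `π'_1(y1) = π'_2(y2)`, then the infimum of
the symmetry-aware risk is `0`, which is strictly less than the infimum of the classic risk. -/
theorem stmt2 (Θ S : Type*) [Nonempty Θ] (n : ℕ)
    (f : Θ → S → EuclideanSpace ℝ (Fin n))
    (s1 s2 : S) (y1 y2 : EuclideanSpace ℝ (Fin n))
    (hs : s1 = s2) (hy : y1 ≠ y2)
    (G1 G2 : Subgroup (Equiv.Perm (Fin n)))
    (hconst : ∀ v : EuclideanSpace ℝ (Fin n), ∃ θ : Θ, f θ s1 = v ∧ f θ s2 = v)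
    (π1 : G1) (π2 : G2)
    (hπ : permVec (π1 : Equiv.Perm (Fin n)) y1 = permVec (π2 : Equiv.Perm (Fin n)) y2) :
    (⨅ p : Θ × G1 × G2,
        (1 / 2 : ℝ) * (‖f p.1 s1 - permVec (p.2.1 : Equiv.Perm (Fin n)) y1‖ ^ 2
          + ‖f p.1 s2 - permVec (p.2.2 : Equiv.Perm (Fin n)) y2‖ ^ 2)) = 0 ∧
    0 < ⨅ θ : Θ, (1 / 2 : ℝ) * (‖f θ s1 - y1‖ ^ 2 + ‖f θ s2 - y2‖ ^ 2) :=
  stmt2_general Θ S n f s1 s2 y1 y2 hs hy G1 G2 hconst π1 π2 hπ
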